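/- arXiv:2105.09566 — 5 statements merged into one kernel-verified Lean document; each statement's English description precedes it below -/
import Mathlib

section
/- Let G be a simple graph with n vertices and m edges such that there exists a set F of at most k edges with G − F a starforest. Then G contains at least m − 3k vertices of degree 1. -/
open SimpleGraph

/-- A starforest is an acyclic graph in which every connected component has at most one
vertex of degree greater than 1 (i.e. every component is a star). -/
def SimpleGraph.IsStarforest {V : Type*} (H : SimpleGraph V) : Prop :=
  H.IsAcyclic ∧ ∀ c : H.ConnectedComponent,
    {v : V | H.connectedComponentMk v = c ∧ 1 < (H.neighborSet v).ncard}.Subsingleton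

/-!
Every edge of a star forest has an endpoint of degree 1, and distinct edges have distinct such
endpoints, so `G - F` has at least `m - |F|` leaves. Removing `F` changes the degrees only of the
at most `2|F|` vertices covered by `F`, so at most `2|F|` of these leaves fail to be leaves of `G`.
-/

theorem Sym2.ncard_biUnion_coe_le {α : Type*} {F : Set (Sym2 α)} (hF : F.Finite) :
    (⋃ e ∈ F, (e : Set α)).ncard ≤ 2 * F.ncard := by
  have hsub : (⋃ e ∈ F, (e : Set α)) ⊆ (fun e => e.out.1) '' F ∪ (fun e => e.out.2) '' F := by
    simp only [Set.iUnion_subset_iff]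
    intro e he v hv
    rw [← e.out_eq, SetLike.mem_coe, Sym2.mem_iff] at hv
    rcases hv with rfl | rfl
    exacts [Or.inl ⟨e, he, rfl⟩, Or.inr ⟨e, he, rfl⟩]
  calc (⋃ e ∈ F, (e : Set α)).ncard
      ≤ ((fun e => e.out.1) '' F ∪ (fun e => e.out.2) '' F).ncard :=
        Set.ncard_le_ncard hsub ((hF.image _).union (hF.image _))
    _ ≤ ((fun e => e.out.1) '' F).ncard + ((fun e => e.out.2) '' F).ncard := Set.ncard_union_le _ _
    _ ≤ 2 * F.ncard := by
        have h₁ := Set.ncard_image_le (f := fun e : Sym2 α => e.out.1) hF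
        have h₂ := Set.ncard_image_le (f := fun e : Sym2 α => e.out.2) hF
        omega

namespace SimpleGraph

variable {V : Type*} (G : SimpleGraph V)

theorem ncard_incidenceSet (v : V) : (G.incidenceSet v).ncard = (G.neighborSet v).ncard := by
  classical
  simp only [← Nat.card_coe_set_eq]
  exact Nat.card_congr (G.incidenceSetEquivNeighborSet v)

theorem eq_of_mem_incidenceSet_of_ncard_neighborSet_eq_one {v : V}
    (hv : (G.neighborSet v).ncard = 1) {e e' : Sym2 V} (he : e ∈ G.incidenceSet v)
    (he' : e' ∈ G.incidenceSet v) : e = e' := by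
  rw [← G.ncard_incidenceSet, Set.ncard_eq_one] at hv
  obtain ⟨d, hd⟩ := hv
  rw [hd] at he he'
  exact he.trans he'.symm

theorem ncard_edgeSet_le_of_forall_exists_leaf [Finite V]
    (h : ∀ e ∈ G.edgeSet, ∃ v ∈ e, (G.neighborSet v).ncard = 1) :
    G.edgeSet.ncard ≤ {v : V | (G.neighborSet v).ncard = 1}.ncard := by
  choose leaf hleaf_mem hleaf using h
  simp only [← Nat.card_coe_set_eq]
  refine Nat.card_le_card_of_injective (fun e => ⟨leaf e e.2, hleaf e e.2⟩)
    fun e e' heq => Subtype.ext ?_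
  have heq : leaf e e.2 = leaf e' e'.2 := congrArg Subtype.val heq
  exact G.eq_of_mem_incidenceSet_of_ncard_neighborSet_eq_one (hleaf e e.2)
    ⟨e.2, hleaf_mem e e.2⟩ ⟨e'.2, heq ▸ hleaf_mem e' e'.2⟩

theorem IsStarforest.exists_leaf [Finite V] (hG : G.IsStarforest) :
    ∀ e ∈ G.edgeSet, ∃ v ∈ e, (G.neighborSet v).ncard = 1 := by
  intro e he
  induction e using Sym2.ind with
  | _ a b =>
    have hab : G.Adj a b := he
    have ha : 0 < (G.neighborSet a).ncard := (Set.ncard_pos).mpr ⟨b, hab⟩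
    have hb : 0 < (G.neighborSet b).ncard := (Set.ncard_pos).mpr ⟨a, hab.symm⟩
    by_contra! hnot
    have hab_comp : G.connectedComponentMk a = G.connectedComponentMk b :=
      ConnectedComponent.sound hab.reachable
    refine hab.ne (hG.2 (G.connectedComponentMk b) ⟨hab_comp, ?_⟩ ⟨rfl, ?_⟩)
    · have := hnot a (Sym2.mem_mk_left a b); omega
    · have := hnot b (Sym2.mem_mk_right a b); omega

theorem neighborSet_deleteEdges_of_notMem {F : Set (Sym2 V)} {v : V}
    (hv : v ∉ ⋃ e ∈ F, (e : Set V)) : (G.deleteEdges F).neighborSet v = G.neighborSet v := by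
  ext w
  simp only [mem_neighborSet, deleteEdges_adj, and_iff_left_iff_imp]
  intro _ hvw
  exact hv (Set.mem_biUnion hvw (Sym2.mem_mk_left v w))

theorem ncard_leaves_deleteEdges_le [Finite V] {F : Set (Sym2 V)} (hF : F.Finite) :
    {v : V | ((G.deleteEdges F).neighborSet v).ncard = 1}.ncard ≤
      {v : V | (G.neighborSet v).ncard = 1}.ncard + 2 * F.ncard := by
  have hsub : {v : V | ((G.deleteEdges F).neighborSet v).ncard = 1} ⊆
      {v : V | (G.neighborSet v).ncard = 1} ∪ ⋃ e ∈ F, (e : Set V) := by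
    intro v hv
    by_cases hcov : v ∈ ⋃ e ∈ F, (e : Set V)
    · exact Or.inr hcov
    · exact Or.inl (by rwa [Set.mem_ofPred_eq, ← G.neighborSet_deleteEdges_of_notMem hcov])
  calc _ ≤ _ := Set.ncard_le_ncard hsub
    _ ≤ _ := Set.ncard_union_le _ _
    _ ≤ _ := Nat.add_le_add_left (Sym2.ncard_biUnion_coe_le hF) _

end SimpleGraph

/-- If there exists a set `F` of at most `k` edges of `G` with `G - F` a
starforest, then `G` contains at least `m - 3k` vertices of degree 1, where `m` is the
number of edges of `G`. -/
theorem degree_one_lower_bound {V : Type*} [Fintype V] (G : SimpleGraph V) (k : ℕ)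
    (F : Set (Sym2 V)) (hF : F ⊆ G.edgeSet) (hk : F.ncard ≤ k)
    (hsf : (G.deleteEdges F).IsStarforest) :
    G.edgeSet.ncard - 3 * k ≤ {v : V | (G.neighborSet v).ncard = 1}.ncard := by
  have hFfin : F.Finite := G.edgeSet.toFinite.subset hF
  have hm : (G.deleteEdges F).edgeSet.ncard + F.ncard = G.edgeSet.ncard := by
    rw [edgeSet_deleteEdges]
    exact Set.ncard_sdiff_add_ncard_of_subset hF
  have hstar := (G.deleteEdges F).ncard_edgeSet_le_of_forall_exists_leaf hsf.exists_leaf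
  have hdelete := G.ncard_leaves_deleteEdges_le hFfin
  omega
end

section
/- Let G be a simple graph and let u, v be two non-adjacent vertices of G such that there are at least k + 1 pairwise distinct (unordered) pairs {a, b} of vertices with u-a-v-b inducing a P₄ or C₄ (i.e., (u,v) is a diagonal of at least k+1 obstructions). Then every set F of at most k non-edges of G such that G + F is (P₄, C₄)-free must contain the pair {u, v}. -/
open SimpleGraph

/-- `u-a-v-b` induces a `P₄` or a `C₄` (the edge `ub` is unconstrained): the four vertices
are pairwise distinct, `ua`, `av`, `vb` are edges, and `uv`, `ab` are non-edges. The pair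
`(u, v)` is then a diagonal of this obstruction, `(a, b)` is the other one. -/
def PathObstruction {V : Type*} (G : SimpleGraph V) (u a v b : V) : Prop :=
  u ≠ v ∧ a ≠ b ∧ u ≠ b ∧
  G.Adj u a ∧ G.Adj a v ∧ G.Adj v b ∧ ¬ G.Adj u v ∧ ¬ G.Adj a b

/-- If the non-adjacent pair `(u, v)` is a diagonal of at least `k + 1`
obstructions (counted by their pairwise distinct other pairs `{a, b}`), then every set `F`
of at most `k` non-edges of `G` such that `G + F` is `(P₄, C₄)`-free contains `{u, v}`. -/
theorem diagonal_forced {V : Type*} [Fintype V] (G : SimpleGraph V) (k : ℕ) (u v : V)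
    (hne : u ≠ v) (huv : ¬ G.Adj u v)
    (hmany : k + 1 ≤ {p : Sym2 V | ∃ a b, PathObstruction G u a v b ∧ p = s(a, b)}.ncard)
    (F : Set (Sym2 V)) (hF : F ⊆ Gᶜ.edgeSet) (hk : F.ncard ≤ k)
    (hfree : ∀ x y z t : V, ¬ PathObstruction (G ⊔ SimpleGraph.fromEdgeSet F) x y z t) :
    s(u, v) ∈ F := by
  by_contra huvF
  have hsub : {p : Sym2 V | ∃ a b, PathObstruction G u a v b ∧ p = s(a, b)} ⊆ F := by
    rintro p ⟨a, b, ⟨h1, h2, h3, h4, h5, h6, h7, h8⟩, rfl⟩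
    by_contra habF
    apply hfree u a v b
    refine ⟨h1, h2, h3, Or.inl h4, Or.inl h5, Or.inl h6, ?_, ?_⟩
    · rintro (h | h)
      · exact h7 h
      · exact huvF ((SimpleGraph.fromEdgeSet_adj _).mp h).1
    · rintro (h | h)
      · exact h8 h
      · exact habF ((SimpleGraph.fromEdgeSet_adj _).mp h).1
  have : {p : Sym2 V | ∃ a b, PathObstruction G u a v b ∧ p = s(a, b)}.ncard ≤ F.ncard :=
    Set.ncard_le_ncard hsub (Set.toFinite F)
  omega
end

section
/- Let G be a simple graph such that every non-adjacent pair (u,v) of vertices is a diagonal of at most k obstructions, and suppose there exists a set F of at most k non-edges of G such that G + F is (P₄, C₄)-free. Then the set X(G) of vertices of G belonging to at least one induced P₄ or C₄ has at most 2k² + 2k elements. -/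
/-!
Every obstruction of `G` has a diagonal in `F`, so `X(G)` is covered by the endpoints of `F`
together with, for each `uv ∈ F`, the vertices `a, b` outside `V(F)` of the obstructions
`u-a-v-b` and `v-a-u-b`. The hypothesis bounds by `k` only the obstructions read from one fixed
end of the diagonal, so the point is that one reading suffices for each `uv ∈ F`: a vertex
outside `V(F)` seen only from `u` and one seen only from `v` always yield an obstruction of
`G + F` (either `x-u-v-y` through the new edge, or one of `G` whose diagonals both avoid `F`).
Hence `|X(G)| ≤ 2|F| + |F| · 2k ≤ 2k² + 2k`.
-/

open SimpleGraph

theorem Set.Finite.ncard_biUnion_le_mul {α ι : Type*} {t : Set ι} (ht : t.Finite)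
    {s : ι → Set α} {m : ℕ} (hs : ∀ i ∈ t, (s i).ncard ≤ m) :
    (⋃ i ∈ t, s i).ncard ≤ t.ncard * m := by
  have hunion := ht.toFinset.set_ncard_biUnion_le s
  have hsum := ht.toFinset.sum_le_card_nsmul (fun i => (s i).ncard) m (by simpa using hs)
  simp only [Set.Finite.mem_toFinset, smul_eq_mul] at hunion hsum
  rw [← Set.ncard_eq_toFinset_card t ht] at hsum
  omega

def Set.sym2Verts {α : Type*} (P : Set (Sym2 α)) : Set α := {x | ∃ p ∈ P, x ∈ p}

theorem Sym2.ncard_setOf_mem_le {α : Type*} (p : Sym2 α) : {x | x ∈ p}.ncard ≤ 2 := by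
  induction p using Sym2.ind with
  | _ a b =>
    simp only [Sym2.mem_iff, Set.ofPred_or, Set.ofPred_eq_eq_singleton]
    exact (Set.ncard_union_le _ _).trans (by simp)

theorem Set.Finite.ncard_sym2Verts_le {α : Type*} {P : Set (Sym2 α)} (hP : P.Finite) :
    P.sym2Verts.ncard ≤ P.ncard * 2 := by
  have hunion : P.sym2Verts = ⋃ p ∈ P, {x | x ∈ p} := by ext; simp [Set.sym2Verts]
  rw [hunion]
  exact hP.ncard_biUnion_le_mul fun p _ => p.ncard_setOf_mem_le

theorem Set.mk_notMem_of_notMem_sym2Verts {α : Type*} {P : Set (Sym2 α)} {x : α}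
    (hx : x ∉ P.sym2Verts) (y : α) : s(x, y) ∉ P ∧ s(y, x) ∉ P :=
  ⟨fun h => hx ⟨_, h, Sym2.mem_mk_left _ _⟩, fun h => hx ⟨_, h, Sym2.mem_mk_right _ _⟩⟩

theorem SimpleGraph.not_adj_sup_fromEdgeSet {V : Type*} {G : SimpleGraph V}
    {F : Set (Sym2 V)} {x y : V} (h : ¬ G.Adj x y) (hxy : s(x, y) ∉ F) :
    ¬ (G ⊔ fromEdgeSet F).Adj x y := by
  simp only [sup_adj, fromEdgeSet_adj, not_or, not_and]
  exact ⟨h, fun h' => absurd h' hxy⟩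

namespace PathObstruction

variable {V : Type*} {G : SimpleGraph V} {F : Set (Sym2 V)} {u a v b : V}

theorem reverse (h : PathObstruction G u a v b) : PathObstruction G b v a u := by
  obtain ⟨huv, hab, hub, hua, hav, hvb, hnuv, hnab⟩ := h
  exact ⟨hab.symm, huv.symm, hub.symm, hvb.symm, hav.symm, hua.symm,
    fun h => hnab h.symm, fun h => hnuv h.symm⟩

theorem sup_fromEdgeSet (h : PathObstruction G u a v b) (huv : s(u, v) ∉ F)
    (hab : s(a, b) ∉ F) : PathObstruction (G ⊔ fromEdgeSet F) u a v b := by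
  obtain ⟨huv', hab', hub, hua, hav, hvb, hnuv, hnab⟩ := h
  exact ⟨huv', hab', hub, (sup_adj _ _ _ _).2 (.inl hua), (sup_adj _ _ _ _).2 (.inl hav),
    (sup_adj _ _ _ _).2 (.inl hvb), not_adj_sup_fromEdgeSet hnuv huv,
    not_adj_sup_fromEdgeSet hnab hab⟩

theorem diagonal_mem_of_free
    (hfree : ∀ x y z t : V, ¬ PathObstruction (G ⊔ fromEdgeSet F) x y z t)
    (h : PathObstruction G u a v b) : s(u, v) ∈ F ∨ s(a, b) ∈ F := by
  by_contra! hF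
  exact hfree u a v b (h.sup_fromEdgeSet hF.1 hF.2)

end PathObstruction

namespace SimpleGraph

variable {V : Type*} (G : SimpleGraph V)

def diagonalPairs (u v : V) : Set (Sym2 V) :=
  {p | ∃ a b, PathObstruction G u a v b ∧ p = s(a, b)}

/-- Not symmetric in `u, v`: the edge `ub` is unconstrained, so the obstructions `u-a-v-b` and
`v-a-u-b` with diagonal `uv` are told apart, and only the former are counted here. -/
def oppositeVerts (u v : V) : Set V :=
  {x | ∃ a b, PathObstruction G u a v b ∧ (x = a ∨ x = b)}

def diagonalOppositeVerts (e : Sym2 V) : Set V :=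
  {x | ∃ u a v b, PathObstruction G u a v b ∧ s(u, v) = e ∧ (x = a ∨ x = b)}

def obstructionVerts : Set V :=
  {x | ∃ u a v b, PathObstruction G u a v b ∧ x ∈ ({u, a, v, b} : Set V)}

variable {G} {F : Set (Sym2 V)} {u v x y : V}

theorem oppositeVerts_eq_sym2Verts (u v : V) :
    G.oppositeVerts u v = (G.diagonalPairs u v).sym2Verts := by
  ext x
  simp only [oppositeVerts, diagonalPairs, Set.sym2Verts, Set.mem_ofPred_eq]
  constructor
  · rintro ⟨a, b, h, hx⟩
    exact ⟨s(a, b), ⟨a, b, h, rfl⟩, Sym2.mem_iff.mpr hx⟩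
  · rintro ⟨_, ⟨a, b, h, rfl⟩, hx⟩
    exact ⟨a, b, h, Sym2.mem_iff.mp hx⟩

theorem diagonalOppositeVerts_mk (u v : V) :
    G.diagonalOppositeVerts s(u, v) = G.oppositeVerts u v ∪ G.oppositeVerts v u := by
  ext x
  simp only [diagonalOppositeVerts, oppositeVerts, Set.mem_union, Set.mem_ofPred_eq,
    Sym2.eq_iff]
  constructor
  · rintro ⟨u', a, v', b, h, ⟨rfl, rfl⟩ | ⟨rfl, rfl⟩, hx⟩
    exacts [.inl ⟨a, b, h, hx⟩, .inr ⟨a, b, h, hx⟩]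
  · rintro (⟨a, b, h, hx⟩ | ⟨a, b, h, hx⟩)
    exacts [⟨u, a, v, b, h, .inl ⟨rfl, rfl⟩, hx⟩, ⟨v, a, u, b, h, .inr ⟨rfl, rfl⟩, hx⟩]

theorem ne_and_not_adj_of_mem_oppositeVerts (hx : x ∈ G.oppositeVerts u v) :
    u ≠ v ∧ ¬ G.Adj u v := by
  obtain ⟨a, b, ⟨huv, -, -, -, -, -, hnuv, -⟩, -⟩ := hx
  exact ⟨huv, hnuv⟩

theorem adj_of_mem_oppositeVerts (hx : x ∈ G.oppositeVerts v u) : G.Adj u x := by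
  obtain ⟨a, b, ⟨-, -, -, -, hau, hub, -⟩, rfl | rfl⟩ := hx
  exacts [hau.symm, hub]

theorem exists_of_mem_oppositeVerts_of_adj (hx : x ∈ G.oppositeVerts v u)
    (hx' : x ∉ G.oppositeVerts u v) (hvx : G.Adj v x) :
    ∃ c, G.Adj u c ∧ ¬ G.Adj v c ∧ ¬ G.Adj x c := by
  obtain ⟨a, b, ⟨hvu, hab, hvb, hva, hau, hub, hnvu, hnab⟩, rfl | rfl⟩ := hx
  · refine ⟨b, hub, fun hvb' => hx' ⟨b, x, ?_, .inr rfl⟩, hnab⟩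
    exact ⟨hvu.symm, hab.symm, hau.ne', hub, hvb'.symm, hva, fun h => hnvu h.symm,
      fun h => hnab h.symm⟩
  · exact absurd ⟨x, a, ⟨hvu.symm, hab.symm, hau.ne', hub, hvx.symm, hva,
      fun h => hnvu h.symm, fun h => hnab h.symm⟩, .inl rfl⟩ hx'

theorem adj_of_notMem_oppositeVerts (huv : u ≠ v) (hnuv : ¬ G.Adj u v) (hux : G.Adj u x)
    (hxv : G.Adj x v) (hx : x ∉ G.oppositeVerts u v) :
    ∀ ⦃w⦄, G.Adj v w → w ≠ x → G.Adj x w := by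
  intro w hvw hwx
  by_contra hxw
  exact hx ⟨x, w, ⟨huv, hwx.symm, fun h => hnuv (h ▸ hvw.symm), hux, hxv, hvw, hnuv, hxw⟩,
    .inl rfl⟩

/-- Here `x` is a tip (the end at `u` of some `v-a-u-x`) and `y` a middle vertex (adjacent to
both `u` and `v`). -/
theorem exists_pathObstruction_sup_of_tip_of_middle (hxF : x ∉ F.sym2Verts)
    (hyF : y ∉ F.sym2Verts) (hx : x ∈ G.oppositeVerts v u) (hvx : ¬ G.Adj v x)
    (hy : y ∈ G.oppositeVerts u v) (hy' : y ∉ G.oppositeVerts v u) (huy : G.Adj u y) :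
    ∃ p q r s, PathObstruction (G ⊔ fromEdgeSet F) p q r s := by
  obtain ⟨hvu, hnvu⟩ := ne_and_not_adj_of_mem_oppositeVerts hx
  have hux := adj_of_mem_oppositeVerts hx
  have hvy := adj_of_mem_oppositeVerts hy
  obtain ⟨d, hvd, hud, hyd⟩ := exists_of_mem_oppositeVerts_of_adj hy hy' huy
  have hyx : G.Adj y x :=
    adj_of_notMem_oppositeVerts hvu hnvu hvy huy.symm hy' hux (fun h => hvx (h ▸ hvy))
  refine ⟨d, v, y, x, PathObstruction.sup_fromEdgeSet ?_
    (Set.mk_notMem_of_notMem_sym2Verts hyF d).2 (Set.mk_notMem_of_notMem_sym2Verts hxF v).2⟩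
  exact ⟨fun h => hud (h ▸ huy), fun h => hnvu (h ▸ hux).symm, fun h => hud (h ▸ hux),
    hvd.symm, hvy, hyx, hyd ∘ .symm, hvx⟩

theorem exists_pathObstruction_sup_of_crossing (he : s(u, v) ∈ F) (hxF : x ∉ F.sym2Verts)
    (hyF : y ∉ F.sym2Verts) (hx : x ∈ G.oppositeVerts v u) (hx' : x ∉ G.oppositeVerts u v)
    (hy : y ∈ G.oppositeVerts u v) (hy' : y ∉ G.oppositeVerts v u) :
    ∃ p q r s, PathObstruction (G ⊔ fromEdgeSet F) p q r s := by
  obtain ⟨hvu, hnvu⟩ := ne_and_not_adj_of_mem_oppositeVerts hx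
  have hux := adj_of_mem_oppositeVerts hx
  have hvy := adj_of_mem_oppositeVerts hy
  by_cases hvx : G.Adj v x <;> by_cases huy : G.Adj u y
  · obtain ⟨c, huc, hvc, hxc⟩ := exists_of_mem_oppositeVerts_of_adj hx hx' hvx
    obtain ⟨d, hvd, hud, hyd⟩ := exists_of_mem_oppositeVerts_of_adj hy hy' huy
    have hxN := adj_of_notMem_oppositeVerts hvu.symm (hnvu ∘ .symm) hux hvx.symm hx'
    have hyN := adj_of_notMem_oppositeVerts hvu hnvu hvy huy.symm hy'
    have hyc := hyN huc fun h => hvc (h ▸ hvy)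
    have hyx := hyN hux fun h => hy' (h ▸ hx)
    have hxd := hxN hvd fun h => hud (h ▸ hux)
    refine ⟨c, y, x, d, PathObstruction.sup_fromEdgeSet ?_
      (Set.mk_notMem_of_notMem_sym2Verts hxF c).2 (Set.mk_notMem_of_notMem_sym2Verts hyF d).1⟩
    exact ⟨fun h => hvc (h ▸ hvx), fun h => hud (h ▸ huy), fun h => hud (h ▸ huc),
      hyc.symm, hyx, hxd, hxc ∘ .symm, hyd⟩
  · exact exists_pathObstruction_sup_of_tip_of_middle hyF hxF hy huy hx hx' hvx
  · exact exists_pathObstruction_sup_of_tip_of_middle hxF hyF hx hvx hy hy' huy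
  · refine ⟨x, u, v, y, fun h => hnvu (h ▸ hux).symm, fun h => hnvu (h ▸ hvy),
      fun h => huy (h ▸ hux), (sup_adj _ _ _ _).2 (.inl hux.symm),
      (sup_adj _ _ _ _).2 (.inr ((fromEdgeSet_adj F).2 ⟨he, hvu.symm⟩)),
      (sup_adj _ _ _ _).2 (.inl hvy),
      not_adj_sup_fromEdgeSet (hvx ∘ .symm) (Set.mk_notMem_of_notMem_sym2Verts hxF v).1,
      not_adj_sup_fromEdgeSet huy (Set.mk_notMem_of_notMem_sym2Verts hyF u).2⟩

theorem diagonalOppositeVerts_diff_subset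
    (hfree : ∀ x y z t : V, ¬ PathObstruction (G ⊔ fromEdgeSet F) x y z t)
    (he : s(u, v) ∈ F) :
    G.diagonalOppositeVerts s(u, v) \ F.sym2Verts ⊆ G.oppositeVerts u v ∨
      G.diagonalOppositeVerts s(u, v) \ F.sym2Verts ⊆ G.oppositeVerts v u := by
  rw [diagonalOppositeVerts_mk]
  by_contra! h
  obtain ⟨x, ⟨hx | hx, hxF⟩, hx'⟩ := Set.not_subset.1 h.1
  · exact hx' hx
  obtain ⟨y, ⟨hy | hy, hyF⟩, hy'⟩ := Set.not_subset.1 h.2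
  · obtain ⟨p, q, r, s, hobs⟩ :=
      exists_pathObstruction_sup_of_crossing he hxF hyF hx hx' hy hy'
    exact hfree p q r s hobs
  · exact hy' hy

theorem ncard_oppositeVerts_le [Finite V] (u v : V) :
    (G.oppositeVerts u v).ncard ≤ (G.diagonalPairs u v).ncard * 2 := by
  rw [oppositeVerts_eq_sym2Verts]
  exact (Set.toFinite _).ncard_sym2Verts_le

theorem ncard_diagonalOppositeVerts_diff_le [Finite V]
    (hfree : ∀ x y z t : V, ¬ PathObstruction (G ⊔ fromEdgeSet F) x y z t)
    {k : ℕ} (hdiag : ∀ u v, (G.diagonalPairs u v).ncard ≤ k) {e : Sym2 V} (he : e ∈ F) :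
    (G.diagonalOppositeVerts e \ F.sym2Verts).ncard ≤ k * 2 := by
  induction e using Sym2.ind with
  | _ u v =>
    have hopp (u v : V) : (G.oppositeVerts u v).ncard ≤ k * 2 :=
      (ncard_oppositeVerts_le u v).trans (Nat.mul_le_mul_right 2 (hdiag u v))
    rcases diagonalOppositeVerts_diff_subset hfree he with h | h
    exacts [(Set.ncard_le_ncard h).trans (hopp u v), (Set.ncard_le_ncard h).trans (hopp v u)]

theorem _root_.PathObstruction.subset_sym2Verts_union {a b : V} (h : PathObstruction G u a v b)
    (he : s(u, v) ∈ F) :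
    {u, a, v, b} ⊆ F.sym2Verts ∪ ⋃ e ∈ F, (G.diagonalOppositeVerts e \ F.sym2Verts) := by
  intro x hx
  by_cases hxF : x ∈ F.sym2Verts
  · exact .inl hxF
  refine .inr (Set.mem_biUnion he ⟨⟨u, a, v, b, h, rfl, ?_⟩, hxF⟩)
  rcases hx with rfl | rfl | rfl | rfl
  · exact absurd ⟨_, he, Sym2.mem_mk_left _ _⟩ hxF
  · exact .inl rfl
  · exact absurd ⟨_, he, Sym2.mem_mk_right _ _⟩ hxF
  · exact .inr rfl

theorem obstructionVerts_subset
    (hfree : ∀ x y z t : V, ¬ PathObstruction (G ⊔ fromEdgeSet F) x y z t) :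
    G.obstructionVerts ⊆
      F.sym2Verts ∪ ⋃ e ∈ F, (G.diagonalOppositeVerts e \ F.sym2Verts) := by
  rintro x ⟨u, a, v, b, h, hx⟩
  rcases h.diagonal_mem_of_free hfree with he | he
  · exact h.subset_sym2Verts_union he hx
  · refine h.reverse.subset_sym2Verts_union (Sym2.eq_swap ▸ he) ?_
    simp only [Set.mem_insert_iff, Set.mem_singleton_iff] at hx ⊢
    tauto

end SimpleGraph

theorem modulator_quadratic_bound_general {V : Type*} [Fintype V] (G : SimpleGraph V) (k : ℕ)
    (hdiag : ∀ u v : V,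
      {p : Sym2 V | ∃ a b, PathObstruction G u a v b ∧ p = s(a, b)}.ncard ≤ k)
    (F : Set (Sym2 V)) (hk : F.ncard ≤ k)
    (hfree : ∀ x y z t : V, ¬ PathObstruction (G ⊔ SimpleGraph.fromEdgeSet F) x y z t) :
    {x : V | ∃ u a v b, PathObstruction G u a v b ∧
      x ∈ ({u, a, v, b} : Set V)}.ncard ≤ 2 * k ^ 2 + 2 * k := by
  have hcover := Set.ncard_le_ncard (G.obstructionVerts_subset hfree) (Set.toFinite _)
  have hverts := (Set.toFinite F).ncard_sym2Verts_le
  have hopp := (Set.toFinite F).ncard_biUnion_le_mul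
    fun e he => G.ncard_diagonalOppositeVerts_diff_le hfree hdiag he
  calc G.obstructionVerts.ncard
      ≤ F.ncard * 2 + F.ncard * (k * 2) :=
        hcover.trans ((Set.ncard_union_le _ _).trans (add_le_add hverts hopp))
    _ ≤ 2 * k ^ 2 + 2 * k := by nlinarith

/-- If every non-adjacent pair `(u, v)` of `G` is a diagonal of at most `k`
obstructions, and there is a set `F` of at most `k` non-edges whose addition makes `G`
`(P₄, C₄)`-free, then the set `X(G)` of vertices lying in at least one induced `P₄` or
`C₄` has at most `2k² + 2k` elements. -/
theorem modulator_quadratic_bound {V : Type*} [Fintype V] (G : SimpleGraph V) (k : ℕ)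
    (hdiag : ∀ u v : V,
      {p : Sym2 V | ∃ a b, PathObstruction G u a v b ∧ p = s(a, b)}.ncard ≤ k)
    (F : Set (Sym2 V)) (hF : F ⊆ Gᶜ.edgeSet) (hk : F.ncard ≤ k)
    (hfree : ∀ x y z t : V, ¬ PathObstruction (G ⊔ SimpleGraph.fromEdgeSet F) x y z t) :
    {x : V | ∃ u a v b, PathObstruction G u a v b ∧
      x ∈ ({u, a, v, b} : Set V)}.ncard ≤ 2 * k ^ 2 + 2 * k :=
  modulator_quadratic_bound_general G k hdiag F hk hfree
end

section
/- Let G be a simple graph such that there exists a set F of at most k edges with G − F a starforest, and suppose G has no connected component with 1 or 2 vertices. Let C be the set of vertices of G adjacent to at least one vertex of degree 1 in G. Then there exists a set F' of at most k edges of G such that G − F' is a starforest admitting a center set C* with C ⊆ C*. -/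
open SimpleGraph

/-- A center set of a starforest: a dominating set containing exactly one vertex of each
connected component. -/
def IsCenterSet {V : Type*} (S : SimpleGraph V) (C : Set V) : Prop :=
  (∀ v : V, v ∉ C → ∃ u ∈ C, S.Adj u v) ∧
  ∀ c : S.ConnectedComponent, ∃! u : V, u ∈ C ∧ u ∈ c.supp

/-!
Put `S = G - F` and let `P` be the set of vertices of `C` with at most one neighbour in `S`.
Since no component of `G` has at most two vertices, no two leaves of `G` are adjacent, so each
`v ∈ P` has a leaf `ℓ v` of `G` outside `C`. Cut every `v ∈ P` off from `S` and join it to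
`ℓ v` instead. A vertex of `P` loses at most one edge of `S`, and if it loses one, the edge
`s(v, ℓ v)` it gains was missing from `S`; so no more edges of `G` are missing than before.
In the new graph each `v ∈ P` is the centre of the single edge `s(v, ℓ v)`, and every other
component is part of a star of `S`: a vertex of `C` in it lies outside `P`, so it has degree at
least two in `S` and is the centre of that star.
-/

theorem Set.eq_singleton_of_ncard_eq_one {α : Type*} {s : Set α} {a : α} (hs : s.ncard = 1)
    (ha : a ∈ s) : s = {a} := by
  obtain ⟨b, rfl⟩ := Set.ncard_eq_one.mp hs
  rw [Set.mem_singleton_iff.mp ha]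

namespace SimpleGraph

variable {V : Type*} {G H S : SimpleGraph V} {x y z : V}

theorem Reachable.reachable_and_mem_of_forall_adj {U : Set V}
    (hU : ∀ a ∈ U, ∀ b, G.Adj a b → H.Adj a b ∧ b ∈ U) (h : G.Reachable x y) (hx : x ∈ U) :
    H.Reachable x y ∧ y ∈ U := by
  obtain ⟨p⟩ := h
  induction p with
  | nil => exact ⟨.refl _, hx⟩
  | cons hadj _ ih =>
    obtain ⟨hH, hb⟩ := hU _ hx _ hadj
    exact (ih hb).imp_left hH.reachable.trans

theorem Reachable.mem_of_neighborSet_subset {U : Set V} (hU : ∀ a ∈ U, G.neighborSet a ⊆ U)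
    (h : G.Reachable x y) (hx : x ∈ U) : y ∈ U :=
  (h.reachable_and_mem_of_forall_adj (H := G) (fun a ha _ hab => ⟨hab, hU a ha hab⟩) hx).2

theorem Reachable.eq_of_neighborSet_eq_empty (h : G.Reachable x y) (hx : G.neighborSet x = ∅) :
    y = x := by
  by_contra hne
  obtain ⟨p⟩ := h
  have : p.snd ∈ G.neighborSet x := p.adj_snd (p.not_nil_of_ne (Ne.symm hne))
  simp [hx] at this

theorem not_adj_of_ncard_neighborSet_eq_one (hcomp : ∀ c : G.ConnectedComponent, 3 ≤ c.supp.ncard)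
    (hx : (G.neighborSet x).ncard = 1) (hy : (G.neighborSet y).ncard = 1) : ¬G.Adj x y := by
  intro hxy
  have hNx := Set.eq_singleton_of_ncard_eq_one hx hxy
  have hNy := Set.eq_singleton_of_ncard_eq_one hy hxy.symm
  have hsupp : (G.connectedComponentMk x).supp ⊆ {x, y} := fun u hu =>
    (ConnectedComponent.exact hu).symm.mem_of_neighborSet_subset
      (by rintro a (rfl | rfl) <;> simp [hNx, hNy]) (Or.inl rfl)
  have := (Set.ncard_le_ncard hsupp).trans_eq (Set.ncard_pair hxy.ne)
  have := hcomp (G.connectedComponentMk x)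
  omega

def IsStarCenter (H : SimpleGraph V) (z : V) : Prop :=
  ∀ y, H.Reachable z y → y ≠ z → H.neighborSet y = {z}

theorem IsStarCenter.eq_of_one_lt_ncard (hz : H.IsStarCenter z) (hy : H.Reachable z y)
    (h : 1 < (H.neighborSet y).ncard) : y = z := by
  by_contra hne
  rw [hz y hy hne, Set.ncard_singleton] at h
  exact h.false

theorem isStarCenter_of_ncard_le_one [Finite V]
    (h : ∀ y, H.Reachable z y → y ≠ z → (H.neighborSet y).ncard ≤ 1) : H.IsStarCenter z := by
  have hleaf : ∀ y, H.Reachable z y → H.Adj y z → H.neighborSet y = {z} := fun y hy hyz =>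
    (Set.ncard_le_one_iff_subsingleton.mp (h y hy hyz.ne)).eq_singleton_of_mem hyz
  have hclosed :
      ∀ a ∈ insert z (H.neighborSet z), H.neighborSet a ⊆ insert z (H.neighborSet z) := by
    rintro a (rfl | ha) b hab
    · exact Or.inr hab
    · exact Or.inl (by rwa [hleaf a ha.reachable ha.symm] at hab)
  intro y hy hne
  rcases hy.mem_of_neighborSet_subset hclosed (Set.mem_insert z _) with rfl | hzy
  · exact absurd rfl hne
  · exact hleaf y hzy.reachable hzy.symm

theorem IsStarforest.exists_isStarCenter [Finite V] (hH : H.IsStarforest) (x : V) :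
    ∃ z, H.Reachable x z ∧ H.IsStarCenter z := by
  by_cases hbig : ∃ z, H.Reachable x z ∧ 1 < (H.neighborSet z).ncard
  · obtain ⟨z, hxz, hz⟩ := hbig
    refine ⟨z, hxz, isStarCenter_of_ncard_le_one fun y hzy hne => ?_⟩
    by_contra! hy
    exact hne (hH.2 (H.connectedComponentMk x) ⟨ConnectedComponent.sound (hxz.trans hzy).symm, hy⟩
      ⟨ConnectedComponent.sound hxz.symm, hz⟩)
  · push Not at hbig
    exact ⟨x, .refl x, isStarCenter_of_ncard_le_one fun y hxy _ => hbig y hxy⟩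

theorem isStarforest_of_forall_exists_isStarCenter
    (h : ∀ x, ∃ z, H.Reachable x z ∧ H.IsStarCenter z) : H.IsStarforest := by
  refine ⟨fun a c hc => ?_, fun c y₁ ⟨hy₁c, hy₁⟩ y₂ ⟨hy₂c, hy₂⟩ => ?_⟩
  · classical
    obtain ⟨z, haz, hz⟩ := h a
    -- every vertex of a cycle has two neighbours on it, so none of them is a leaf of the star
    have hcenter : ∀ v ∈ c.support, v = z := by
      intro v hv
      by_contra hne
      have hsub : c.toSubgraph.neighborSet v ⊆ {z} :=
        hz v (haz.symm.trans (c.takeUntil v hv).reachable) hne ▸ c.toSubgraph.neighborSet_subset v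
      have := Set.ncard_le_ncard hsub
      rw [hc.ncard_neighborSet_toSubgraph_eq_two hv, Set.ncard_singleton] at this
      omega
    exact (c.adj_snd hc.not_nil).ne ((hcenter a c.start_mem_support).trans
      (hcenter _ (List.mem_of_mem_tail (c.snd_mem_tail_support hc.not_nil))).symm)
  · obtain ⟨z, hy₁z, hz⟩ := h y₁
    have hy₁₂ : H.Reachable y₁ y₂ := ConnectedComponent.exact (hy₁c.trans hy₂c.symm)
    rw [hz.eq_of_one_lt_ncard hy₁z.symm hy₁, hz.eq_of_one_lt_ncard (hy₁z.symm.trans hy₁₂) hy₂]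

theorem exists_isCenterSet_superset (T : Set V)
    (h : ∀ x, ∃ z, H.Reachable x z ∧ H.IsStarCenter z ∧ ∀ v ∈ T, H.Reachable x v → v = z) :
    ∃ Z, IsCenterSet H Z ∧ T ⊆ Z := by
  choose f hreach hcenter hT using h
  set ctr : H.ConnectedComponent → V := fun c => f (Quot.out c)
  have hout : ∀ v, H.Reachable (Quot.out (H.connectedComponentMk v)) v := fun v =>
    ConnectedComponent.exact (Quot.out_eq _)
  have hmk : ∀ c, H.connectedComponentMk (ctr c) = c := fun c =>
    (ConnectedComponent.sound (hreach _)).symm.trans (Quot.out_eq c)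
  refine ⟨Set.range ctr, ⟨fun v hv => ?_, fun c => ⟨ctr c, ⟨⟨c, rfl⟩, hmk c⟩, ?_⟩⟩,
    fun v hv => ⟨_, (hT _ v hv (hout v)).symm⟩⟩
  · have hne : v ≠ ctr (H.connectedComponentMk v) := fun h => hv ⟨_, h.symm⟩
    have hadj : ctr (H.connectedComponentMk v) ∈ H.neighborSet v := by
      rw [hcenter _ v ((hreach _).symm.trans (hout v)) hne]
      rfl
    exact ⟨_, ⟨_, rfl⟩, hadj.symm⟩
  · rintro _ ⟨⟨c', rfl⟩, hc'⟩
    obtain rfl : c' = c := (hmk c').symm.trans hc'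
    rfl

def reattach (S : SimpleGraph V) (P : Set V) (ℓ : V → V) : SimpleGraph V where
  Adj x y := x ≠ y ∧ (S.Adj x y ∧ x ∉ P ∧ y ∉ P ∨ x ∈ P ∧ y = ℓ x ∨ y ∈ P ∧ x = ℓ y)
  symm := ⟨by
    rintro x y ⟨hne, ⟨hxy, hx, hy⟩ | h | h⟩
    exacts [⟨hne.symm, .inl ⟨hxy.symm, hy, hx⟩⟩, ⟨hne.symm, .inr (.inr h)⟩,
      ⟨hne.symm, .inr (.inl h)⟩]⟩
  loopless := ⟨fun _ h => h.1 rfl⟩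

section Reattach

variable {P : Set V} {ℓ : V → V} {v : V}

theorem reattach_adj : (S.reattach P ℓ).Adj x y ↔
    x ≠ y ∧ (S.Adj x y ∧ x ∉ P ∧ y ∉ P ∨ x ∈ P ∧ y = ℓ x ∨ y ∈ P ∧ x = ℓ y) :=
  Iff.rfl

theorem reattach_le (hSG : S ≤ G) (hℓ : ∀ v ∈ P, G.neighborSet (ℓ v) = {v}) :
    S.reattach P ℓ ≤ G := by
  have hGℓ : ∀ v ∈ P, G.Adj (ℓ v) v := fun v hv => by
    rw [← mem_neighborSet, hℓ v hv]
    rfl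
  intro x y hxy
  rcases reattach_adj.mp hxy with ⟨-, ⟨h, -⟩ | ⟨hx, rfl⟩ | ⟨hy, rfl⟩⟩
  exacts [hSG h, (hGℓ x hx).symm, hGℓ y hy]

theorem neighborSet_reattach_of_notMem (hx : x ∉ P ∪ ℓ '' P) :
    (S.reattach P ℓ).neighborSet x = S.neighborSet x \ P := by
  ext y
  simp only [mem_neighborSet, Set.mem_sdiff, reattach_adj]
  constructor
  · rintro ⟨-, ⟨h, -, hy⟩ | ⟨hxP, -⟩ | ⟨hy, rfl⟩⟩
    exacts [⟨h, hy⟩, absurd (Or.inl hxP) hx, absurd (Or.inr ⟨y, hy, rfl⟩) hx]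
  · rintro ⟨h, hy⟩
    exact ⟨h.ne, .inl ⟨h, fun hxP => hx (Or.inl hxP), hy⟩⟩

variable (hℓP : ∀ v ∈ P, ℓ v ∉ P)
include hℓP

theorem reattach_adj_leaf (hv : v ∈ P) : (S.reattach P ℓ).Adj v (ℓ v) :=
  reattach_adj.mpr ⟨fun h => hℓP v hv (h ▸ hv), .inr (.inl ⟨hv, rfl⟩)⟩

theorem neighborSet_reattach_of_mem (hv : v ∈ P) : (S.reattach P ℓ).neighborSet v = {ℓ v} := by
  ext y
  refine ⟨fun hy => ?_, fun hy => (Set.mem_singleton_iff.mp hy) ▸ reattach_adj_leaf hℓP hv⟩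
  rcases reattach_adj.mp hy with ⟨-, ⟨-, hvP, -⟩ | ⟨-, rfl⟩ | ⟨hyP, rfl⟩⟩
  exacts [absurd hv hvP, rfl, absurd hv (hℓP y hyP)]

theorem ncard_edgeSet_le_reattach [Finite V] (hP : ∀ v ∈ P, (S.neighborSet v).ncard ≤ 1) :
    S.edgeSet.ncard ≤ (S.reattach P ℓ).edgeSet.ncard := by
  classical
  set H := S.reattach P ℓ
  rw [Set.ncard_le_ncard_iff_ncard_sdiff_le_ncard_sdiff]
  -- each lost edge of `S` is charged to the new edge `s(v, ℓ v)` at its endpoint `v ∈ P`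
  have hlost : ∀ e ∈ S.edgeSet \ H.edgeSet, ∃ v ∈ P, v ∈ e ∧ ¬S.Adj v (ℓ v) := by
    intro e he
    induction e using Sym2.ind with
    | h x y =>
      obtain ⟨hS, hH⟩ := he
      have hH' : ¬H.Adj x y := hH
      rw [reattach_adj] at hH'
      have hxy : x ∈ P ∨ y ∈ P := by
        by_contra! h
        exact hH' ⟨hS.ne, .inl ⟨hS, h⟩⟩
      rcases hxy with hx | hy
      · refine ⟨x, hx, Sym2.mem_mk_left x y, fun hxℓ => hH' ⟨hS.ne, .inr (.inl ⟨hx, ?_⟩)⟩⟩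
        exact (Set.ncard_le_one_iff_subsingleton.mp (hP x hx)) hS hxℓ
      · refine ⟨y, hy, Sym2.mem_mk_right x y, fun hyℓ => hH' ⟨hS.ne, .inr (.inr ⟨hy, ?_⟩)⟩⟩
        exact (Set.ncard_le_one_iff_subsingleton.mp (hP y hy)) hS.symm hyℓ
  choose f hfP hfe hfS using hlost
  refine Set.ncard_le_ncard_of_injOn
    (fun e => if he : e ∈ S.edgeSet \ H.edgeSet then s(f e he, ℓ (f e he)) else e)
    (fun e he => ?_) fun e₁ he₁ e₂ he₂ heq => ?_
  · rw [dif_pos he]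
    exact ⟨reattach_adj_leaf hℓP (hfP e he), hfS e he⟩
  simp only [dif_pos he₁, dif_pos he₂] at heq
  have hf : f e₁ he₁ = f e₂ he₂ := by
    rcases Sym2.eq_iff.mp heq with ⟨h, -⟩ | ⟨h, -⟩
    · exact h
    · exact absurd (h ▸ hfP e₁ he₁) (hℓP _ (hfP e₂ he₂))
  obtain ⟨u₁, hu₁⟩ := Sym2.mem_iff_exists.mp (hfe e₁ he₁)
  obtain ⟨u₂, hu₂⟩ := Sym2.mem_iff_exists.mp (hfe e₂ he₂)
  have h₁ : S.Adj (f e₁ he₁) u₁ := by rw [← mem_edgeSet, ← hu₁]; exact he₁.1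
  have h₂ : S.Adj (f e₁ he₁) u₂ := by rw [hf, ← mem_edgeSet, ← hu₂]; exact he₂.1
  rw [hu₁, hu₂, hf, (Set.ncard_le_one_iff_subsingleton.mp (hP _ (hfP e₁ he₁))) h₁ h₂]

variable (hSG : S ≤ G) (hℓ : ∀ v ∈ P, G.neighborSet (ℓ v) = {v})
include hSG hℓ

theorem neighborSet_reattach_leaf (hv : v ∈ P) :
    (S.reattach P ℓ).neighborSet (ℓ v) = {v} := by
  refine Set.Subset.antisymm ?_ (Set.singleton_subset_iff.mpr (reattach_adj_leaf hℓP hv).symm)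
  rw [← hℓ v hv]
  exact fun _ hy => reattach_le hSG hℓ hy

theorem reachable_reattach_of_mem (hv : v ∈ P) (hy : (S.reattach P ℓ).Reachable v y) :
    y = v ∨ y = ℓ v :=
  hy.mem_of_neighborSet_subset (U := {v, ℓ v}) (by
    rintro a (rfl | rfl)
    · simp [neighborSet_reattach_of_mem hℓP hv]
    · simp [neighborSet_reattach_leaf hℓP hSG hℓ hv]) (Or.inl rfl)

theorem isStarCenter_reattach_of_mem (hv : v ∈ P) : (S.reattach P ℓ).IsStarCenter v :=
  fun _ hy hne => (reachable_reattach_of_mem hℓP hSG hℓ hv hy).resolve_left hne ▸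
    neighborSet_reattach_leaf hℓP hSG hℓ hv

theorem Reachable.of_reattach (hx : x ∉ P ∪ ℓ '' P) (h : (S.reattach P ℓ).Reachable x y) :
    S.Reachable x y ∧ y ∉ P ∪ ℓ '' P := by
  refine h.reachable_and_mem_of_forall_adj (U := (P ∪ ℓ '' P)ᶜ) (fun a ha b hab => ?_) hx
  have hb : b ∈ S.neighborSet a \ P := neighborSet_reattach_of_notMem ha ▸ hab
  refine ⟨hb.1, ?_⟩
  rintro (hbP | ⟨w, hw, rfl⟩)
  · exact hb.2 hbP
  · have haw : a ∈ (S.reattach P ℓ).neighborSet (ℓ w) := hab.symm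
    rw [neighborSet_reattach_leaf hℓP hSG hℓ hw, Set.mem_singleton_iff] at haw
    exact ha (Or.inl (haw ▸ hw))

theorem exists_isStarCenter_reattach_of_mem {T : Set V} (hℓT : ∀ v ∈ P, ℓ v ∉ T)
    (hx : x ∈ P ∪ ℓ '' P) :
    ∃ z, (S.reattach P ℓ).Reachable x z ∧ (S.reattach P ℓ).IsStarCenter z ∧
      ∀ v ∈ T, (S.reattach P ℓ).Reachable x v → v = z := by
  obtain ⟨v, hv, hxv⟩ : ∃ v ∈ P, (S.reattach P ℓ).Reachable x v := by
    rcases hx with hx | ⟨v, hv, rfl⟩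
    exacts [⟨x, hx, .refl x⟩, ⟨v, hv, (reattach_adj_leaf hℓP hv).symm.reachable⟩]
  refine ⟨v, hxv, isStarCenter_reattach_of_mem hℓP hSG hℓ hv, fun w hw hxw => ?_⟩
  exact (reachable_reattach_of_mem hℓP hSG hℓ hv (hxv.symm.trans hxw)).resolve_right
    fun h => hℓT v hv (h ▸ hw)

theorem exists_isStarCenter_reattach_of_notMem [Finite V] {T : Set V} (hS : S.IsStarforest)
    (hT : ∀ v ∈ T, v ∉ P → 1 < (S.neighborSet v).ncard) (hx : x ∉ P ∪ ℓ '' P) :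
    ∃ z, (S.reattach P ℓ).Reachable x z ∧ (S.reattach P ℓ).IsStarCenter z ∧
      ∀ v ∈ T, (S.reattach P ℓ).Reachable x v → v = z := by
  set H := S.reattach P ℓ
  obtain ⟨z, hxz, hz⟩ := hS.exists_isStarCenter x
  have hreach : ∀ y, H.Reachable x y → S.Reachable x y ∧ y ∉ P ∪ ℓ '' P := fun _ =>
    Reachable.of_reattach hℓP hSG hℓ hx
  have hNH : ∀ y, H.Reachable x y → H.neighborSet y = S.neighborSet y \ P := fun y hy =>
    neighborSet_reattach_of_notMem (hreach y hy).2
  -- a vertex of `T` outside `P` keeps degree > 1 in `S`, so it can only be the centre `z`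
  have hTz : ∀ v ∈ T, H.Reachable x v → v = z := fun v hv hxv =>
    hz.eq_of_one_lt_ncard (hxz.symm.trans (hreach v hxv).1)
      (hT v hv fun hvP => (hreach v hxv).2 (Or.inl hvP))
  by_cases hzP : z ∈ P
  · have hxz' : x ≠ z := fun h => hx (Or.inl (h ▸ hzP))
    have hiso : H.neighborSet x = ∅ := by
      rw [hNH x (.refl x), hz x hxz.symm hxz', Set.sdiff_eq_empty]
      exact Set.singleton_subset_iff.mpr hzP
    refine ⟨x, .refl x, fun y hy hne => absurd (hy.eq_of_neighborSet_eq_empty hiso) hne,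
      fun v hv hxv => absurd (hTz v hv hxv ▸ hzP) fun hvP => (hreach v hxv).2 (Or.inl hvP)⟩
  have hHxz : H.Reachable x z := by
    by_cases hxz' : x = z
    · exact hxz' ▸ .refl x
    · have hadj : z ∈ H.neighborSet x := by
        rw [hNH x (.refl x), hz x hxz.symm hxz']
        exact ⟨rfl, hzP⟩
      exact Adj.reachable hadj
  refine ⟨z, hHxz, fun y hy hne => ?_, hTz⟩
  rw [hNH y (hHxz.trans hy), hz y (hxz.symm.trans (hreach y (hHxz.trans hy)).1) hne]
  exact (Set.disjoint_singleton_left.mpr hzP).sdiff_eq_left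

theorem exists_isStarCenter_reattach [Finite V] {T : Set V} (hS : S.IsStarforest)
    (hℓT : ∀ v ∈ P, ℓ v ∉ T) (hT : ∀ v ∈ T, v ∉ P → 1 < (S.neighborSet v).ncard) (x : V) :
    ∃ z, (S.reattach P ℓ).Reachable x z ∧ (S.reattach P ℓ).IsStarCenter z ∧
      ∀ v ∈ T, (S.reattach P ℓ).Reachable x v → v = z := by
  by_cases hx : x ∈ P ∪ ℓ '' P
  exacts [exists_isStarCenter_reattach_of_mem hℓP hSG hℓ hℓT hx,
    exists_isStarCenter_reattach_of_notMem hℓP hSG hℓ hS hT hx]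

end Reattach

end SimpleGraph

theorem centers_can_be_labeled_general {V : Type*} [Fintype V] (G : SimpleGraph V) (k : ℕ)
    (hcomp : ∀ c : G.ConnectedComponent, 3 ≤ c.supp.ncard)
    (F : Set (Sym2 V)) (hk : F.ncard ≤ k)
    (hsf : (G.deleteEdges F).IsStarforest) :
    ∃ F' : Set (Sym2 V), F' ⊆ G.edgeSet ∧ F'.ncard ≤ k ∧
      (G.deleteEdges F').IsStarforest ∧
      ∃ C' : Set V, IsCenterSet (G.deleteEdges F') C' ∧
        {v : V | ∃ w, (G.neighborSet w).ncard = 1 ∧ G.Adj v w} ⊆ C' := by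
  set S := G.deleteEdges F
  set C := {v : V | ∃ w, (G.neighborSet w).ncard = 1 ∧ G.Adj v w}
  have hleaf : ∀ v ∈ C, ∃ w, G.neighborSet w = {v} := fun v ⟨w, hw, hvw⟩ =>
    ⟨w, Set.eq_singleton_of_ncard_eq_one hw hvw.symm⟩
  choose! ℓ hℓ using hleaf
  have hℓC : ∀ v ∈ C, ℓ v ∉ C := by
    rintro v hv ⟨u, hu, hadj⟩
    exact not_adj_of_ncard_neighborSet_eq_one hcomp (by rw [hℓ v hv, Set.ncard_singleton]) hu hadj
  set P := {v ∈ C | (S.neighborSet v).ncard ≤ 1}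
  have hℓP : ∀ v ∈ P, ℓ v ∉ P := fun v hv h => hℓC v hv.1 h.1
  have hℓ' : ∀ v ∈ P, G.neighborSet (ℓ v) = {v} := fun v hv => hℓ v hv.1
  have hSG : S ≤ G := deleteEdges_le F
  have hHG := reattach_le hSG hℓ'
  have hstar := exists_isStarCenter_reattach hℓP hSG hℓ' hsf (fun v hv => hℓC v hv.1)
    fun v hv hvP => not_le.mp fun h => hvP ⟨hv, h⟩
  refine ⟨G.edgeSet \ (S.reattach P ℓ).edgeSet, Set.sdiff_subset, ?_, ?_⟩
  · calc (G.edgeSet \ (S.reattach P ℓ).edgeSet).ncard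
        = G.edgeSet.ncard - (S.reattach P ℓ).edgeSet.ncard := Set.ncard_sdiff (edgeSet_mono hHG)
      _ ≤ G.edgeSet.ncard - S.edgeSet.ncard :=
          Nat.sub_le_sub_left (ncard_edgeSet_le_reattach hℓP fun v hv => hv.2) _
      _ = (G.edgeSet ∩ F).ncard := by
          rw [← Set.ncard_sdiff (edgeSet_mono hSG), edgeSet_deleteEdges, Set.sdiff_sdiff_right_self]
      _ ≤ k := (Set.ncard_le_ncard Set.inter_subset_right).trans hk
  rw [deleteEdges_sdiff_eq_of_le hHG]
  exact ⟨isStarforest_of_forall_exists_isStarCenter fun x => (hstar x).imp fun _ h => ⟨h.1, h.2.1⟩,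
    exists_isCenterSet_superset C hstar⟩

/-- If `G` has no component on 1 or 2 vertices and some set `F` of at most
`k` edges makes `G - F` a starforest, then there is a set `F'` of at most `k` edges such
that `G - F'` is a starforest with a center set containing every vertex of `G` adjacent to
a degree-1 vertex of `G`. -/
theorem centers_can_be_labeled {V : Type*} [Fintype V] (G : SimpleGraph V) (k : ℕ)
    (hcomp : ∀ c : G.ConnectedComponent, 3 ≤ c.supp.ncard)
    (F : Set (Sym2 V)) (hF : F ⊆ G.edgeSet) (hk : F.ncard ≤ k)
    (hsf : (G.deleteEdges F).IsStarforest) :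
    ∃ F' : Set (Sym2 V), F' ⊆ G.edgeSet ∧ F'.ncard ≤ k ∧
      (G.deleteEdges F').IsStarforest ∧
      ∃ C' : Set V, IsCenterSet (G.deleteEdges F') C' ∧
        {v : V | ∃ w, (G.neighborSet w).ncard = 1 ∧ G.Adj v w} ⊆ C' :=
  centers_can_be_labeled_general G k hcomp F hk hsf
end

section
/- Let S be a starforest with center set C*, let v be a vertex not in C* whose neighbor in S is u ∈ C*, and let w be a vertex with degree 0 in S (its own star is a single vertex) with w ≠ v. Then the graph S' obtained from S by deleting edge uv and adding edge vw is a starforest with the same number of edges, admitting center set (C* \ {w}) ∪ {v}. -/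
/-
Write `H := S \ edge v u`. Since `v ∉ C*` is a leaf of the star centred at `u`, the vertex `v` is
isolated in `H`, so `S = H ⊔ edge v u` and `S' = H ⊔ edge w v`, with both `v` and `w` isolated
in `H`. Adding an edge at an isolated vertex `a` does not change reachability between vertices
other than `a`, which is all that is needed to move the starforest property and center sets
from `S` down to `H` and back up to `S'`: `H` is a subgraph of a starforest, `insert v C*` is a
center set of `H`, and in `S'` the new component `{v, w}` keeps the center `v` only.
-/

open SimpleGraph

section

variable {V : Type*} {G H : SimpleGraph V} {C : Set V} {a b u v x y : V}

lemma SimpleGraph.IsIsolated.eq_of_reachable (ha : G.IsIsolated a) (h : G.Reachable a x) :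
    x = a :=
  by_contra fun hxa ↦ not_reachable_of_neighborSet_left_eq_empty (Ne.symm hxa)
    ha.neighborSet_eq_empty h

lemma SimpleGraph.fromEdgeSet_edgeSet_sdiff_union (G : SimpleGraph V) (a b c d : V) :
    fromEdgeSet ((G.edgeSet \ {s(a, b)}) ∪ {s(c, d)}) = G \ edge a b ⊔ edge c d := by
  ext x y
  simp only [fromEdgeSet_adj, Set.mem_union, Set.mem_sdiff, Set.mem_singleton_iff, mem_edgeSet,
    sup_adj, sdiff_adj, adj_edge]
  constructor
  · rintro ⟨h | h, hxy⟩
    · exact Or.inl ⟨h.1, fun h' ↦ h.2 h'.1.symm⟩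
    · exact Or.inr ⟨h.symm, hxy⟩
  · rintro (⟨h, h'⟩ | ⟨h, hxy⟩)
    · exact ⟨Or.inl ⟨h, fun e ↦ h' ⟨e.symm, h.ne⟩⟩, h.ne⟩
    · exact ⟨Or.inr h.symm, hxy⟩

lemma SimpleGraph.isStarforest_iff :
    G.IsStarforest ↔ G.IsAcyclic ∧ ∀ x y, G.Reachable x y → 1 < (G.neighborSet x).ncard →
      1 < (G.neighborSet y).ncard → x = y := by
  refine and_congr_right fun _ ↦ ⟨fun h x y hxy hx hy ↦ ?_, ?_⟩
  · exact h (G.connectedComponentMk x) ⟨rfl, hx⟩ ⟨(ConnectedComponent.sound hxy).symm, hy⟩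
  · rintro h c x ⟨rfl, hx⟩ y ⟨hy, hy'⟩
    exact h x y (ConnectedComponent.exact hy.symm) hx hy'

lemma isCenterSet_iff_reachable :
    IsCenterSet G C ↔ (∀ x ∉ C, ∃ c ∈ C, G.Adj c x) ∧ (∀ x, ∃ c ∈ C, G.Reachable c x) ∧
      ∀ c ∈ C, ∀ c' ∈ C, G.Reachable c c' → c = c' := by
  refine and_congr_right fun _ ↦ ⟨fun h ↦ ⟨fun x ↦ ?_, fun c hc c' hc' hcc' ↦ ?_⟩, ?_⟩
  · obtain ⟨c, ⟨hc, hcx⟩, -⟩ := h (G.connectedComponentMk x)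
    exact ⟨c, hc, ConnectedComponent.exact hcx⟩
  · exact (h (G.connectedComponentMk c')).unique ⟨hc, ConnectedComponent.sound hcc'⟩ ⟨hc', rfl⟩
  · rintro ⟨hex, huniq⟩ K
    obtain ⟨x, rfl⟩ := K.exists_rep
    obtain ⟨c, hc, hcx⟩ := hex x
    refine ⟨c, ⟨hc, ConnectedComponent.sound hcx⟩, fun c' ⟨hc', hc'x⟩ ↦ huniq c' hc' c hc ?_⟩
    exact (ConnectedComponent.exact hc'x).trans hcx.symm

lemma SimpleGraph.reachable_sup_edge_iff (ha : H.IsIsolated a) (hx : x ≠ a) (hy : y ≠ a) :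
    (H ⊔ edge a b).Reachable x y ↔ H.Reachable x y := by
  classical
  refine ⟨fun h ↦ ?_, fun h ↦ h.mono le_sup_left⟩
  -- contracting the edge `ab` onto `b` turns every step of `H ⊔ edge a b` into an `H`-walk
  let f : V → V := fun z ↦ if z = a then b else z
  have hstep : ∀ p q, (H ⊔ edge a b).Adj p q → H.Reachable (f p) (f q) := by
    rintro p q (hpq | hpq)
    · have hp : p ≠ a := fun h ↦ ha q (h ▸ hpq)
      have hq : q ≠ a := fun h ↦ ha p (h ▸ hpq.symm)
      simpa [f, hp, hq] using hpq.reachable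
    · rw [edge_adj] at hpq
      rcases hpq with ⟨⟨rfl, rfl⟩ | ⟨rfl, rfl⟩, -⟩ <;> simp [f]
  rw [reachable_iff_reflTransGen] at h ⊢
  simpa [f, hx, hy, ← reachable_iff_reflTransGen] using
    h.lift' f fun p q hpq ↦ (reachable_iff_reflTransGen _ _).1 (hstep p q hpq)

lemma SimpleGraph.ncard_edgeSet_sup_edge [Finite V] (ha : H.IsIsolated a) (hab : a ≠ b) :
    (H ⊔ edge a b).edgeSet.ncard = H.edgeSet.ncard + 1 := by
  rw [edgeSet_sup, edgeSet_edge_of_ne hab, Set.union_singleton, Set.ncard_insert_of_notMem]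
  exact ha b

lemma SimpleGraph.neighborSet_sup_edge_of_ne (hxa : x ≠ a) (hxb : x ≠ b) :
    (H ⊔ edge a b).neighborSet x = H.neighborSet x := by
  ext y
  simp [edge_adj, hxa, hxb]

lemma SimpleGraph.neighborSet_sup_edge_left (ha : H.IsIsolated a) (hab : a ≠ b) :
    (H ⊔ edge a b).neighborSet a = {b} := by
  ext y
  simp only [mem_neighborSet, sup_adj, ha y, edge_adj, false_or, Set.mem_singleton_iff]
  grind

lemma SimpleGraph.IsStarforest.anti [Finite V] (hle : H ≤ G) (hG : G.IsStarforest) :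
    H.IsStarforest := by
  rw [isStarforest_iff] at hG ⊢
  refine ⟨hG.1.anti hle, fun x y hxy hx hy ↦ hG.2 x y (hxy.mono hle) ?_ ?_⟩
  · exact hx.trans_le (Set.ncard_le_ncard (neighborSet_mono hle x))
  · exact hy.trans_le (Set.ncard_le_ncard (neighborSet_mono hle y))

lemma SimpleGraph.IsStarforest.sup_edge (hH : H.IsStarforest) (ha : H.IsIsolated a)
    (hb : H.IsIsolated b) (hab : a ≠ b) : (H ⊔ edge a b).IsStarforest := by
  rw [isStarforest_iff] at hH ⊢
  refine ⟨hH.1.sup_edge_of_not_reachable fun h ↦ hab (ha.eq_of_reachable h).symm, ?_⟩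
  have hdeg : ∀ x, 1 < ((H ⊔ edge a b).neighborSet x).ncard →
      x ≠ a ∧ 1 < (H.neighborSet x).ncard := by
    intro x hx
    have hxa : x ≠ a := by
      rintro rfl
      rw [neighborSet_sup_edge_left ha hab, Set.ncard_singleton] at hx
      exact lt_irrefl 1 hx
    have hxb : x ≠ b := by
      rintro rfl
      rw [edge_comm, neighborSet_sup_edge_left hb hab.symm, Set.ncard_singleton] at hx
      exact lt_irrefl 1 hx
    exact ⟨hxa, neighborSet_sup_edge_of_ne hxa hxb ▸ hx⟩
  intro x y hxy hx hy
  obtain ⟨hxa, hx⟩ := hdeg x hx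
  obtain ⟨hya, hy⟩ := hdeg y hy
  exact hH.2 x y ((reachable_sup_edge_iff ha hxa hya).1 hxy) hx hy

lemma SimpleGraph.IsStarforest.neighborSet_eq_singleton [Finite V] (hS : G.IsStarforest)
    (hC : IsCenterSet G C) (hv : v ∉ C) (hu : u ∈ C) (huv : G.Adj u v) :
    G.neighborSet v = {u} := by
  rw [isCenterSet_iff_reachable] at hC
  rw [isStarforest_iff] at hS
  have two_lt : ∀ {z p q}, G.Adj z p → G.Adj z q → p ≠ q → 1 < (G.neighborSet z).ncard :=
    fun hp hq hpq ↦ (Set.one_lt_ncard_iff).2 ⟨_, _, hp, hq, hpq⟩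
  refine Set.eq_singleton_iff_unique_mem.2 ⟨huv.symm, fun x (hvx : G.Adj v x) ↦ ?_⟩
  by_contra hxu
  by_cases hxC : x ∈ C
  · exact hxu (hC.2.2 x hxC u hu (hvx.symm.reachable.trans huv.symm.reachable))
  · -- then `v` and `x` are adjacent and both have two distinct neighbours
    obtain ⟨c, hc, hcx⟩ := hC.1 x hxC
    have hcv : c ≠ v := fun h ↦ hv (h ▸ hc)
    exact hvx.ne (hS.2 v x hvx.reachable (two_lt huv.symm hvx (Ne.symm hxu))
      (two_lt hvx.symm hcx.symm (Ne.symm hcv)))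

lemma IsCenterSet.sup_edge (hC : IsCenterSet H C) (ha : H.IsIsolated a) (hb : b ∈ C)
    (hab : a ≠ b) : IsCenterSet (H ⊔ edge a b) (C \ {a}) := by
  rw [isCenterSet_iff_reachable] at hC ⊢
  obtain ⟨hdom, hex, huniq⟩ := hC
  have hbC : b ∈ C \ {a} := ⟨hb, hab.symm⟩
  have hba : (H ⊔ edge a b).Adj b a := Or.inr ((edge_adj ..).2 ⟨Or.inr ⟨rfl, rfl⟩, hab.symm⟩)
  refine ⟨fun x hx ↦ ?_, fun x ↦ ?_, fun c hc c' hc' hcc' ↦ ?_⟩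
  · by_cases hxa : x = a
    · exact ⟨b, hbC, hxa ▸ hba⟩
    · obtain ⟨c, hc, hcx⟩ := hdom x fun h ↦ hx ⟨h, hxa⟩
      exact ⟨c, ⟨hc, fun (hca : c = a) ↦ ha x (hca ▸ hcx)⟩, Or.inl hcx⟩
  · obtain ⟨c, hc, hcx⟩ := hex x
    by_cases hca : c = a
    · subst hca
      exact ⟨b, hbC, ha.eq_of_reachable hcx ▸ hba.reachable⟩
    · exact ⟨c, ⟨hc, hca⟩, hcx.mono le_sup_left⟩
  · exact huniq c hc.1 c' hc'.1 ((reachable_sup_edge_iff ha hc.2 hc'.2).1 hcc')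

lemma IsCenterSet.of_sup_edge (hC : IsCenterSet (H ⊔ edge a b) C) (ha : H.IsIsolated a)
    (haC : a ∉ C) : IsCenterSet H (insert a C) := by
  rw [isCenterSet_iff_reachable] at hC ⊢
  obtain ⟨hdom, hex, huniq⟩ := hC
  have hne : ∀ c ∈ C, c ≠ a := fun c hc h ↦ haC (h ▸ hc)
  refine ⟨fun x hx ↦ ?_, fun x ↦ ?_, ?_⟩
  · obtain ⟨hxa, hxC⟩ := not_or.1 (Set.mem_insert_iff.not.1 hx)
    obtain ⟨c, hc, hcx | hcx⟩ := hdom x hxC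
    · exact ⟨c, Set.mem_insert_of_mem a hc, hcx⟩
    · rw [edge_adj] at hcx
      rcases hcx.1 with ⟨hca, -⟩ | ⟨-, hxa'⟩
      exacts [(hne c hc hca).elim, (hxa hxa').elim]
  · by_cases hxa : x = a
    · exact ⟨a, Set.mem_insert a C, hxa ▸ Reachable.rfl⟩
    · obtain ⟨c, hc, hcx⟩ := hex x
      exact ⟨c, Set.mem_insert_of_mem a hc, (reachable_sup_edge_iff ha (hne c hc) hxa).1 hcx⟩
  · rintro c (rfl | hc) c' (rfl | hc') hcc'
    · rfl
    · exact (ha.eq_of_reachable hcc').symm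
    · exact ha.eq_of_reachable hcc'.symm
    · exact huniq c hc c' hc' (hcc'.mono le_sup_left)

end

/-- If `S` is a starforest with center set `C*`, `v ∉ C*` is a leaf with
neighbor `u ∈ C*`, and `w ≠ v` is an isolated vertex of `S`, then the graph obtained from
`S` by deleting the edge `uv` and adding the edge `vw` is a starforest with the same number
of edges, admitting center set `(C* \ {w}) ∪ {v}`. -/
theorem star_edge_swap {V : Type*} [Fintype V] (S : SimpleGraph V) (Cs : Set V)
    (hsf : S.IsStarforest) (hcs : IsCenterSet S Cs)
    (u v w : V) (hv : v ∉ Cs) (hu : u ∈ Cs) (huv : S.Adj u v)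
    (hw : S.neighborSet w = ∅) (hwv : w ≠ v) :
    (SimpleGraph.fromEdgeSet ((S.edgeSet \ {s(u, v)}) ∪ {s(v, w)})).IsStarforest ∧
    (SimpleGraph.fromEdgeSet ((S.edgeSet \ {s(u, v)}) ∪ {s(v, w)})).edgeSet.ncard =
      S.edgeSet.ncard ∧
    IsCenterSet (SimpleGraph.fromEdgeSet ((S.edgeSet \ {s(u, v)}) ∪ {s(v, w)}))
      ((Cs \ {w}) ∪ {v}) := by
  have hleaf := hsf.neighborSet_eq_singleton hcs hv hu huv
  rw [fromEdgeSet_edgeSet_sdiff_union, edge_comm u v]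
  set H := S \ edge v u
  have hS : H ⊔ edge v u = S := sdiff_sup_cancel ((edge_le_iff S).2 (Or.inr huv.symm))
  have hHv : H.IsIsolated v := by
    rintro y ⟨hvy, hne⟩
    have hyu : y ∈ ({u} : Set V) := hleaf ▸ hvy
    exact hne ((edge_adj ..).2 ⟨Or.inl ⟨rfl, hyu⟩, hvy.ne⟩)
  have hHw : H.IsIsolated w := fun y hwy ↦ (neighborSet_eq_empty S).1 hw y hwy.1
  rw [← hS] at hsf hcs
  refine ⟨(hsf.anti le_sup_left).sup_edge hHv hHw hwv.symm, ?_, ?_⟩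
  · rw [← hS, ncard_edgeSet_sup_edge hHv hwv.symm, ncard_edgeSet_sup_edge hHv huv.ne.symm]
  · rw [edge_comm, Set.union_singleton, Set.insert_sdiff_singleton_comm hwv.symm]
    exact (hcs.of_sup_edge hHv hv).sup_edge hHw (Set.mem_insert v Cs) hwv
end
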